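/- arXiv:1801.08691 — 3 statements merged into one kernel-verified Lean document; each statement's English description precedes it below -/
import Mathlib

section
/- Let V be a symmetric positive definite N×N real matrix, h ∈ Γ₀(ℝ^N) and h* its Fenchel conjugate. Then for every x ∈ ℝ^N and every ρ with 0 < ρ < +∞, prox^V_{ρ h*}(x) + ρ V^{-1}( prox^{V^{-1}}_{h/ρ}( V x / ρ ) ) = x. In particular, for ρ = 1, prox^V_h(x) = x − V^{-1}( prox^{V^{-1}}_{h*}( V x ) ). -/
open Matrix

noncomputable section

/-- Euclidean norm `‖x‖ = √⟨x,x⟩` on `ℝ^N` (inner product `⟨x,y⟩ = ∑ i, x i * y i`). -/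
def euNorm {N : ℕ} (x : Fin N → ℝ) : ℝ := Real.sqrt (x ⬝ᵥ x)

/-- `p` is the proximal point of `h` at `x` in the metric induced by `V`, i.e. `p`
minimizes `z ↦ h z + (1/2)‖x - z‖²_V` (with `‖w‖²_V = ⟨w, V w⟩`). -/
def IsProxPt {N : ℕ} (V : Matrix (Fin N) (Fin N) ℝ) (h : (Fin N → ℝ) → EReal)
    (x p : Fin N → ℝ) : Prop :=
  ∀ z : Fin N → ℝ,
    h p + ((1 / 2 * ((x - p) ⬝ᵥ (V *ᵥ (x - p))) : ℝ) : EReal) ≤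
      h z + ((1 / 2 * ((x - z) ⬝ᵥ (V *ᵥ (x - z))) : ℝ) : EReal)

/-- `h` belongs to `Γ₀(ℝ^N)`: proper, never `-∞`, lower semicontinuous and convex. -/
def Gamma0 {N : ℕ} (h : (Fin N → ℝ) → EReal) : Prop :=
  (∃ z, h z ≠ ⊤) ∧ (∀ z, h z ≠ ⊥) ∧ LowerSemicontinuous h ∧
    ∀ x y : Fin N → ℝ, ∀ t : ℝ, 0 ≤ t → t ≤ 1 →
      h (t • x + (1 - t) • y) ≤ (t : EReal) * h x + ((1 - t : ℝ) : EReal) * h y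

/-- Fenchel conjugate `h*(v) = sup_x ⟨v,x⟩ - h(x)`. -/
def fconj {N : ℕ} (h : (Fin N → ℝ) → EReal) (v : Fin N → ℝ) : EReal :=
  ⨆ x : Fin N → ℝ, ((v ⬝ᵥ x : ℝ) : EReal) - h x

/-!
First-order optimality turns the two prox points into subgradients: `w = W (x - p)` is a
subgradient of `h*` at `p` and `g = W⁻¹ (W x - q)` one of `h` at `q`. The Fenchel–Young
inequality `h*(p) ≥ ⟨p, q⟩ - h(q)`, its equality case `h*(g) = ⟨g, q⟩ - h(q)` and the subgradient
inequality of `h*` between `p` and `g` give `⟨g - p, w - q⟩ ≤ 0`. As `g - p = W⁻¹ (w - q)` and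
`W⁻¹` is positive definite, `q = w`. The weight `ρ` is absorbed into the metric
(`prox^V_{ρf} = prox^{V/ρ}_f`), and the second identity is the first one for `V⁻¹` at `V x`.
Finally `h*` is proper because `h` has an affine minorant, obtained by separating a point from
the closed convex epigraph of `h`.
-/

namespace Matrix

variable {n : Type*} [Fintype n]

lemma IsHermitian.dotProduct_mulVec_comm {W : Matrix n n ℝ} (hW : W.IsHermitian) (a b : n → ℝ) :
    a ⬝ᵥ (W *ᵥ b) = b ⬝ᵥ (W *ᵥ a) := by
  have hWt : Wᵀ = W := by simpa [conjTranspose_eq_transpose_of_trivial] using hW.eq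
  rw [dotProduct_mulVec, ← mulVec_transpose, hWt, dotProduct_comm]

lemma IsHermitian.dotProduct_mulVec_sub_smul {W : Matrix n n ℝ} (hW : W.IsHermitian)
    (a d : n → ℝ) (t : ℝ) :
    (a - t • d) ⬝ᵥ (W *ᵥ (a - t • d)) =
      a ⬝ᵥ (W *ᵥ a) - 2 * t * (a ⬝ᵥ (W *ᵥ d)) + t ^ 2 * (d ⬝ᵥ (W *ᵥ d)) := by
  simp only [mulVec_sub, mulVec_smul, sub_dotProduct, dotProduct_sub, smul_dotProduct,
    dotProduct_smul, smul_eq_mul, hW.dotProduct_mulVec_comm d a]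
  ring

lemma PosDef.inv_mulVec_mulVec [DecidableEq n] {V : Matrix n n ℝ} (hV : V.PosDef) (x : n → ℝ) :
    V⁻¹ *ᵥ (V *ᵥ x) = x := by
  rw [mulVec_mulVec, nonsing_inv_mul _ ((isUnit_iff_isUnit_det _).1 hV.isUnit), one_mulVec]

lemma PosDef.eq_zero_of_dotProduct_mulVec_nonpos {V : Matrix n n ℝ} (hV : V.PosDef)
    {d : n → ℝ} (hd : d ⬝ᵥ (V *ᵥ d) ≤ 0) : d = 0 := by
  by_contra hne
  simpa using hd.trans_lt (hV.dotProduct_mulVec_pos hne)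

end Matrix

lemma le_of_forall_le_add_mul {a b C : ℝ} (hC : 0 ≤ C)
    (h : ∀ t : ℝ, 0 < t → t ≤ 1 → a ≤ b + t * C) : a ≤ b := by
  refine le_of_forall_pos_le_add fun ε hε => ?_
  set t := min 1 (ε / (C + 1))
  have ht : 0 < t := lt_min one_pos (by positivity)
  have htC : t * C ≤ ε :=
    calc t * C ≤ ε / (C + 1) * (C + 1) :=
          mul_le_mul (min_le_right _ _) (by linarith) hC (by positivity)
      _ = ε := div_mul_cancel₀ _ (by positivity)
  linarith [h t ht (min_le_left _ _)]

variable {N : ℕ}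

def epigraph (f : (Fin N → ℝ) → EReal) : Set ((Fin N → ℝ) × ℝ) := {w | f w.1 ≤ w.2}

def IsSubgradient (f : (Fin N → ℝ) → EReal) (p g : Fin N → ℝ) : Prop :=
  ∀ z, f p + ((g ⬝ᵥ (z - p) : ℝ) : EReal) ≤ f z

namespace IsProxPt

variable {W : Matrix (Fin N) (Fin N) ℝ} {f : (Fin N → ℝ) → EReal} {x p : Fin N → ℝ}

lemma ne_top (hp : IsProxPt W f x p) {z : Fin N → ℝ} (hz : f z ≠ ⊤) : f p ≠ ⊤ := by
  intro htop
  have := hp z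
  rw [htop, EReal.top_add_coe, top_le_iff] at this
  exact EReal.add_ne_top hz (EReal.coe_ne_top _) this

lemma of_const_mul {c : ℝ} (hc : 0 < c) (hp : IsProxPt W (fun z => (c : EReal) * f z) x p) :
    IsProxPt (c⁻¹ • W) f x p := by
  have hmul : ∀ (a : EReal) (r : ℝ), (c⁻¹ : ℝ) * ((c : EReal) * a + (r : EReal)) =
      a + ((c⁻¹ * r : ℝ) : EReal) := by
    intro a r
    rw [EReal.left_distrib_of_nonneg_of_ne_top (by exact_mod_cast (inv_pos.2 hc).le)
      (EReal.coe_ne_top _), ← mul_assoc, ← EReal.coe_mul, inv_mul_cancel₀ hc.ne', EReal.coe_one,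
      one_mul, EReal.coe_mul]
  intro z
  have := mul_le_mul_of_nonneg_left (hp z) (by exact_mod_cast (inv_pos.2 hc).le :
    (0 : EReal) ≤ (c⁻¹ : ℝ))
  simp only [hmul, smul_mulVec, dotProduct_smul, smul_eq_mul] at this ⊢
  convert this using 3 <;> ring

lemma isSubgradient (hW : W.PosSemidef) (hf : Convex ℝ (epigraph f)) (hp : IsProxPt W f x p)
    {A : ℝ} (hA : f p = A) : IsSubgradient f p (W *ᵥ (x - p)) := by
  intro z
  have hdot : (W *ᵥ (x - p)) ⬝ᵥ (z - p) = (x - p) ⬝ᵥ (W *ᵥ (z - p)) := by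
    rw [dotProduct_comm, hW.1.dotProduct_mulVec_comm]
  have hQ : 0 ≤ (z - p) ⬝ᵥ (W *ᵥ (z - p)) := by simpa using hW.dotProduct_mulVec_nonneg (z - p)
  have hle_of_le : ∀ B : ℝ, f z ≤ B → A + (x - p) ⬝ᵥ (W *ᵥ (z - p)) ≤ B := by
    -- test the prox inequality against `p + t • (z - p)` and let `t → 0`
    intro B hB
    refine le_of_forall_le_add_mul (C := (z - p) ⬝ᵥ (W *ᵥ (z - p)) / 2) (by positivity)
      fun t ht0 ht1 => ?_
    have hmem := hf (show (z, B) ∈ epigraph f from hB) (show (p, A) ∈ epigraph f from hA.le)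
      ht0.le (sub_nonneg.2 ht1) (add_sub_cancel t 1)
    have hseg : f (t • z + (1 - t) • p) ≤ ((t * B + (1 - t) * A : ℝ) : EReal) := by
      simpa [epigraph] using hmem
    have hres : x - (t • z + (1 - t) • p) = (x - p) - t • (z - p) := by module
    have hprox := (hp (t • z + (1 - t) • p)).trans (add_le_add_left hseg _)
    rw [hA, hres, ← EReal.coe_add, ← EReal.coe_add, EReal.coe_le_coe_iff,
      hW.1.dotProduct_mulVec_sub_smul] at hprox
    have : t * (A + (x - p) ⬝ᵥ (W *ᵥ (z - p))) ≤
        t * (B + t * ((z - p) ⬝ᵥ (W *ᵥ (z - p)) / 2)) := by linarith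
    exact le_of_mul_le_mul_left this ht0
  rw [hA, hdot, ← EReal.coe_add]
  induction hfz : f z using EReal.rec with
  | bot => linarith [hle_of_le (A + (x - p) ⬝ᵥ (W *ᵥ (z - p)) - 1) (by simp [hfz])]
  | coe B => exact EReal.coe_le_coe_iff.2 (hle_of_le B hfz.le)
  | top => exact le_top

end IsProxPt

section Conjugate

variable {h : (Fin N → ℝ) → EReal}

lemma coe_dotProduct_sub_le_fconj (v x : Fin N → ℝ) :
    ((v ⬝ᵥ x : ℝ) : EReal) - h x ≤ fconj h v :=
  le_iSup (fun x => ((v ⬝ᵥ x : ℝ) : EReal) - h x) x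

lemma convex_epigraph_fconj : Convex ℝ (epigraph (fconj h)) := by
  rintro ⟨v₁, r₁⟩ hw₁ ⟨v₂, r₂⟩ hw₂ a b ha hb hab
  refine (iSup_le fun x => ?_ : fconj h _ ≤ _)
  have e₁ := (coe_dotProduct_sub_le_fconj v₁ x).trans hw₁
  have e₂ := (coe_dotProduct_sub_le_fconj v₂ x).trans hw₂
  induction hx : h x using EReal.rec with
  | bot => simp [hx] at e₁
  | coe c =>
    rw [hx, ← EReal.coe_sub, EReal.coe_le_coe_iff] at e₁ e₂
    dsimp only at e₁ e₂
    simp only [Prod.fst_add, Prod.smul_fst, Prod.snd_add, Prod.smul_snd, smul_eq_mul,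
      add_dotProduct, smul_dotProduct, ← EReal.coe_sub, EReal.coe_le_coe_iff]
    have hc : c = a * c + b * c := by rw [← add_mul, hab, one_mul]
    linarith [mul_le_mul_of_nonneg_left e₁ ha, mul_le_mul_of_nonneg_left e₂ hb]
  | top => simp

lemma fconj_le_of_isSubgradient {q g : Fin N → ℝ} {c : ℝ} (hc : h q = c)
    (hg : IsSubgradient h q g) : fconj h g ≤ ((g ⬝ᵥ q - c : ℝ) : EReal) := by
  refine iSup_le fun z => ?_
  have hz := hg z
  rw [hc, ← EReal.coe_add] at hz
  induction hhz : h z using EReal.rec with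
  | bot => exact absurd (le_bot_iff.1 (hz.trans_eq hhz)) (EReal.coe_ne_bot _)
  | coe r =>
    rw [hhz, EReal.coe_le_coe_iff, dotProduct_sub] at hz
    rw [← EReal.coe_sub, EReal.coe_le_coe_iff]
    linarith
  | top => simp

lemma dotProduct_sub_nonpos_of_isSubgradient {p q w g : Fin N → ℝ} {c : ℝ} (hc : h q = c)
    (hw : IsSubgradient (fconj h) p w) (hg : IsSubgradient h q g) :
    (g - p) ⬝ᵥ (w - q) ≤ 0 := by
  have young : ((p ⬝ᵥ q - c : ℝ) : EReal) ≤ fconj h p := by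
    simpa [hc, ← EReal.coe_sub] using coe_dotProduct_sub_le_fconj (h := h) p q
  have chain := (add_le_add_left young _).trans ((hw g).trans (fconj_le_of_isSubgradient hc hg))
  rw [← EReal.coe_add, EReal.coe_le_coe_iff] at chain
  simp only [sub_dotProduct, dotProduct_sub, dotProduct_comm w] at chain ⊢
  linarith

end Conjugate

lemma StrongDual.exists_eq_dotProduct_add_mul {n : Type*} [Fintype n] [DecidableEq n]
    (ℓ : StrongDual ℝ ((n → ℝ) × ℝ)) : ∃ y : n → ℝ, ∀ z t, ℓ (z, t) = y ⬝ᵥ z + t * ℓ (0, 1) := by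
  set φ := (ℓ.comp (ContinuousLinearMap.inl ℝ (n → ℝ) ℝ)).toLinearMap
  refine ⟨(dotProductEquiv ℝ n).symm φ, fun z t => ?_⟩
  rw [show ((z, t) : (n → ℝ) × ℝ) = (z, 0) + t • (0, 1) by simp, map_add, map_smul, smul_eq_mul]
  exact congrArg (· + _) (congrArg (· z) ((dotProductEquiv ℝ n).apply_symm_apply φ)).symm

namespace Gamma0

variable {h : (Fin N → ℝ) → EReal}

lemma convex_epigraph (hh : Gamma0 h) : Convex ℝ (epigraph h) := by
  rintro ⟨z₁, r₁⟩ hw₁ ⟨z₂, r₂⟩ hw₂ a b ha hb hab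
  obtain rfl : b = 1 - a := by linarith
  have hscale : ∀ {t r : ℝ} {X : EReal}, 0 ≤ t → X ≤ r → (t : EReal) * X ≤ ((t * r : ℝ) : EReal) :=
    fun ht hX => (mul_le_mul_of_nonneg_left hX (by exact_mod_cast ht)).trans_eq (by norm_cast)
  calc h (a • z₁ + (1 - a) • z₂) ≤ (a : EReal) * h z₁ + ((1 - a : ℝ) : EReal) * h z₂ :=
        hh.2.2.2 z₁ z₂ a ha (by linarith)
    _ ≤ ((a * r₁ + (1 - a) * r₂ : ℝ) : EReal) := by
        rw [EReal.coe_add]; exact add_le_add (hscale ha hw₁) (hscale hb hw₂)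

lemma isClosed_epigraph (hh : Gamma0 h) : IsClosed (epigraph h) :=
  hh.2.2.1.isClosed_epigraph.preimage
    (continuous_fst.prodMk (EReal.continuous_coe_iff.2 continuous_snd))

lemma exists_affine_minorant (hh : Gamma0 h) :
    ∃ (y : Fin N → ℝ) (c : ℝ), ∀ z, ((y ⬝ᵥ z + c : ℝ) : EReal) ≤ h z := by
  obtain ⟨z₀, hz₀⟩ := hh.1
  set r₀ := (h z₀).toReal
  have hr₀ : h z₀ = r₀ := (EReal.coe_toReal hz₀ (hh.2.1 z₀)).symm
  have hout : (z₀, r₀ - 1) ∉ epigraph h := by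
    simp only [epigraph, Set.mem_ofPred_eq, hr₀, EReal.coe_le_coe_iff, not_le]
    linarith
  obtain ⟨ℓ, u, hℓout, hℓepi⟩ :=
    geometric_hahn_banach_point_closed hh.convex_epigraph hh.isClosed_epigraph hout
  obtain ⟨y, hℓ⟩ := StrongDual.exists_eq_dotProduct_add_mul ℓ
  set s := ℓ (0, 1)
  have hs : 0 < s := by
    have := hℓepi (z₀, r₀) (by simp [epigraph, hr₀])
    rw [hℓ] at this hℓout
    linarith
  refine ⟨(-s⁻¹) • y, u / s, fun z => ?_⟩
  have hy : (-s⁻¹) • y ⬝ᵥ z + u / s = (u - y ⬝ᵥ z) / s := by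
    rw [smul_dotProduct, smul_eq_mul]
    ring
  rw [hy]
  induction hhz : h z using EReal.rec with
  | bot => exact absurd hhz (hh.2.1 z)
  | coe t =>
    have := hℓepi (z, t) (by simp [epigraph, hhz])
    rw [hℓ] at this
    rw [EReal.coe_le_coe_iff, div_le_iff₀ hs]
    linarith
  | top => exact le_top

lemma exists_fconj_ne_top (hh : Gamma0 h) : ∃ y, fconj h y ≠ ⊤ := by
  obtain ⟨y, c, hyc⟩ := hh.exists_affine_minorant
  refine ⟨y, ne_top_of_le_ne_top (EReal.coe_ne_top (-c)) (iSup_le fun z => ?_)⟩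
  have hz := hyc z
  induction hhz : h z using EReal.rec with
  | bot => exact absurd (le_bot_iff.1 (hz.trans_eq hhz)) (EReal.coe_ne_bot _)
  | coe r =>
    rw [hhz, EReal.coe_le_coe_iff] at hz
    rw [← EReal.coe_sub, EReal.coe_le_coe_iff]
    linarith
  | top => simp

lemma fconj_ne_bot (hh : Gamma0 h) (v : Fin N → ℝ) : fconj h v ≠ ⊥ := by
  obtain ⟨z, hz⟩ := hh.1
  refine ne_bot_of_le_ne_bot ?_ (coe_dotProduct_sub_le_fconj v z)
  rw [← EReal.coe_toReal hz (hh.2.1 z), ← EReal.coe_sub]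
  exact EReal.coe_ne_bot _

end Gamma0

theorem Gamma0.eq_mulVec_sub_of_isProxPt {h : (Fin N → ℝ) → EReal} (hh : Gamma0 h)
    {W : Matrix (Fin N) (Fin N) ℝ} (hW : W.PosDef) {x p q : Fin N → ℝ}
    (hp : IsProxPt W (fconj h) x p) (hq : IsProxPt W⁻¹ h (W *ᵥ x) q) : q = W *ᵥ (x - p) := by
  obtain ⟨y, hy⟩ := hh.exists_fconj_ne_top
  obtain ⟨z₀, hz₀⟩ := hh.1
  have hA : fconj h p = (fconj h p).toReal :=
    (EReal.coe_toReal (hp.ne_top hy) (hh.fconj_ne_bot p)).symm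
  have hc : h q = (h q).toReal := (EReal.coe_toReal (hq.ne_top hz₀) (hh.2.1 q)).symm
  have hw := hp.isSubgradient hW.posSemidef convex_epigraph_fconj hA
  have hg := hq.isSubgradient hW.inv.posSemidef hh.convex_epigraph hc
  have hpair := dotProduct_sub_nonpos_of_isSubgradient hc hw hg
  have hgp : W⁻¹ *ᵥ (W *ᵥ x - q) - p = W⁻¹ *ᵥ (W *ᵥ (x - p) - q) := by
    simp only [mulVec_sub, hW.inv_mulVec_mulVec]
    abel
  rw [hgp, dotProduct_comm] at hpair
  exact (sub_eq_zero.1 (hW.inv.eq_zero_of_dotProduct_mulVec_nonpos hpair)).symm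

/-- (Moreau identity in `H_V`.) For `V` SPD, `h ∈ Γ₀(ℝ^N)` and `ρ > 0`:
`prox^V_{ρh*}(x) + ρ V⁻¹ (prox^{V⁻¹}_{h/ρ}(Vx/ρ)) = x`; in particular for `ρ = 1`,
`prox^V_h(x) = x - V⁻¹ (prox^{V⁻¹}_{h*}(Vx))`. -/
theorem stmt_1 {N : ℕ} (V : Matrix (Fin N) (Fin N) ℝ) (hV : V.PosDef)
    (h : (Fin N → ℝ) → EReal) (hh : Gamma0 h) :
    (∀ ρ : ℝ, 0 < ρ → ∀ x p q : Fin N → ℝ,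
        IsProxPt V (fun z => ((ρ : ℝ) : EReal) * fconj h z) x p →
        IsProxPt V⁻¹ (fun z => ((1 / ρ : ℝ) : EReal) * h z) (ρ⁻¹ • (V *ᵥ x)) q →
        p + ρ • (V⁻¹ *ᵥ q) = x) ∧
    (∀ x p q : Fin N → ℝ,
        IsProxPt V h x p →
        IsProxPt V⁻¹ (fconj h) (V *ᵥ x) q →
        p = x - V⁻¹ *ᵥ q) := by
  have hdet : IsUnit V.det := (isUnit_iff_isUnit_det V).1 hV.isUnit
  refine ⟨fun ρ hρ x p q hp hq => ?_, fun x p q hp hq => ?_⟩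
  · have hWinv : (ρ⁻¹ • V)⁻¹ = ρ • V⁻¹ := by
      refine inv_eq_left_inv ?_
      rw [smul_mul_smul, mul_inv_cancel₀ hρ.ne', nonsing_inv_mul _ hdet, one_smul]
    have hq' : IsProxPt (ρ⁻¹ • V)⁻¹ h ((ρ⁻¹ • V) *ᵥ x) q := by
      simpa [hWinv, smul_mulVec] using hq.of_const_mul (one_div_pos.2 hρ)
    rw [hh.eq_mulVec_sub_of_isProxPt (hV.smul (inv_pos.2 hρ)) (hp.of_const_mul hρ) hq',
      smul_mulVec, mulVec_smul, hV.inv_mulVec_mulVec, smul_smul, mul_inv_cancel₀ hρ.ne', one_smul]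
    abel
  · have hp' : IsProxPt V⁻¹⁻¹ h (V⁻¹ *ᵥ (V *ᵥ x)) p := by
      rwa [nonsing_inv_nonsing_inv _ hdet, hV.inv_mulVec_mulVec]
    rw [hh.eq_mulVec_sub_of_isProxPt hV.inv hq hp', mulVec_sub, hV.inv_mulVec_mulVec]
end
end

section
/- Let h ∈ Γ₀(ℝ^N), let P be a symmetric positive definite N×N matrix, let u₁,…,u_r ∈ ℝ^N be linearly independent (r ≤ N), U = (u₁,…,u_r) ∈ ℝ^{N×r}, Q = U U^T, and assume V = P − Q is symmetric positive definite. Then ‖P^{-1/2} U‖² < 1, and for every x ∈ ℝ^N the map L : ℝ^r → ℝ^r defined by L(α) = U^T( x − prox^P_h( x + P^{-1} U α ) ) + α is Lipschitz continuous with Lipschitz constant 1 + ‖P^{-1/2} U‖², strongly monotone with modulus c = 1 − ‖P^{-1/2} U‖² > 0 (i.e. ⟨L(α) − L(β), α − β⟩ ≥ c‖α − β‖² for all α, β ∈ ℝ^r), has a unique zero α* ∈ ℝ^r, and prox^V_h(x) = prox^P_h( x + P^{-1} U α* ). -/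
open Matrix

noncomputable section

/-- The ℓ²→ℓ² operator norm of a matrix. -/
def matOpNorm {m n : ℕ} (A : Matrix (Fin m) (Fin n) ℝ) : ℝ :=
  ‖LinearMap.toContinuousLinearMap (Matrix.toEuclideanLin A)‖

/-!
Write `B = S⁻¹ U`. Since `S⁻¹ V S⁻¹ = I - B Bᵀ` is positive definite, `‖Bᵀ w‖ < ‖w‖` for
`w ≠ 0`, and compactness of the unit sphere upgrades this to `‖B‖ = ‖Bᵀ‖ < 1`.

Let `p α = prox^P_h (x + P⁻¹ U α)`. Firm nonexpansiveness of `prox^P_h` in the `P`-metric says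
that `s = S (p α - p β)` satisfies `‖s‖² ≤ ⟨B (α - β), s⟩`, so `‖s‖ ≤ ‖B‖ ‖α - β‖`; since
`L α - L β = (α - β) - Bᵀ s`, Cauchy–Schwarz gives the Lipschitz and strong monotonicity bounds.
A strongly monotone Lipschitz map has a unique zero, because `α ↦ α - τ L α` is a contraction
for small `τ > 0`. Finally, at a zero `α*` we have `U α* = -U Uᵀ (x - p α*)`, so
`P (x + P⁻¹ U α* - p α*) = V (x - p α*)`, and the variational characterisation of
`prox^P_h (x + P⁻¹ U α*)` becomes that of `prox^V_h x`.
-/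

open scoped Matrix.Norms.L2Operator RealInnerProductSpace

section Euclidean

variable {m n : ℕ}

lemma euNorm_eq_norm_toLp (x : Fin n → ℝ) : euNorm x = ‖WithLp.toLp 2 x‖ := by
  rw [EuclideanSpace.norm_eq, euNorm, dotProduct]
  simp [Real.norm_eq_abs, sq]

lemma dotProduct_eq_inner_toLp (x y : Fin n → ℝ) :
    x ⬝ᵥ y = ⟪WithLp.toLp 2 x, WithLp.toLp 2 y⟫ := by
  simp [EuclideanSpace.inner_eq_star_dotProduct, dotProduct_comm]

lemma euNorm_nonneg (x : Fin n → ℝ) : 0 ≤ euNorm x := Real.sqrt_nonneg _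

lemma euNorm_sq (x : Fin n → ℝ) : euNorm x ^ 2 = x ⬝ᵥ x := by
  rw [euNorm_eq_norm_toLp, dotProduct_eq_inner_toLp, real_inner_self_eq_norm_sq]

lemma euNorm_lt_euNorm_of_dotProduct_self_lt {x : Fin m → ℝ} {y : Fin n → ℝ}
    (h : x ⬝ᵥ x < y ⬝ᵥ y) :
    euNorm x < euNorm y :=
  Real.sqrt_lt_sqrt (dotProduct_self_star_nonneg x) h

lemma dotProduct_le_euNorm_mul (x y : Fin n → ℝ) : x ⬝ᵥ y ≤ euNorm x * euNorm y := by
  rw [dotProduct_eq_inner_toLp, euNorm_eq_norm_toLp, euNorm_eq_norm_toLp]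
  exact real_inner_le_norm _ _

lemma euNorm_sub_le (x y : Fin n → ℝ) : euNorm (x - y) ≤ euNorm x + euNorm y := by
  simpa only [euNorm_eq_norm_toLp, WithLp.toLp_sub] using norm_sub_le _ _

lemma matOpNorm_eq_norm (A : Matrix (Fin m) (Fin n) ℝ) : matOpNorm A = ‖A‖ := rfl

lemma matOpNorm_nonneg (A : Matrix (Fin m) (Fin n) ℝ) : 0 ≤ matOpNorm A := norm_nonneg _

lemma matOpNorm_transpose (A : Matrix (Fin m) (Fin n) ℝ) : matOpNorm Aᵀ = matOpNorm A :=
  A.l2_opNorm_conjTranspose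

lemma euNorm_mulVec_le (A : Matrix (Fin m) (Fin n) ℝ) (x : Fin n → ℝ) :
    euNorm (A *ᵥ x) ≤ matOpNorm A * euNorm x := by
  rw [euNorm_eq_norm_toLp, euNorm_eq_norm_toLp, matOpNorm_eq_norm]
  exact A.l2_opNorm_mulVec _

theorem ContinuousLinearMap.opNorm_lt_one_of_norm_apply_lt {E F : Type*}
    [NormedAddCommGroup E] [NormedSpace ℝ E] [FiniteDimensional ℝ E]
    [NormedAddCommGroup F] [NormedSpace ℝ F] (f : E →L[ℝ] F)
    (hf : ∀ v ≠ 0, ‖f v‖ < ‖v‖) : ‖f‖ < 1 := by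
  rw [← f.sSup_sphere_eq_norm]
  rcases ((fun v => ‖f v‖) '' Metric.sphere 0 1).eq_empty_or_nonempty with hempty | hne
  · rw [hempty, Real.sSup_empty]; exact one_pos
  obtain ⟨v, hv, hmax⟩ := ((isCompact_sphere 0 1).image (by fun_prop)).sSup_mem hne
  have hv1 : ‖v‖ = 1 := by simpa using hv
  rw [← hmax, ← hv1]
  exact hf v (by rintro rfl; simp at hv1)

lemma matOpNorm_lt_one {A : Matrix (Fin m) (Fin n) ℝ}
    (hA : ∀ v ≠ 0, euNorm (A *ᵥ v) < euNorm v) : matOpNorm A < 1 :=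
  ContinuousLinearMap.opNorm_lt_one_of_norm_apply_lt _ fun v hv => by
    have := hA (WithLp.ofLp v) (by simpa using hv)
    rwa [euNorm_eq_norm_toLp, euNorm_eq_norm_toLp] at this

end Euclidean

section StronglyMonotone

variable {E : Type*} [NormedAddCommGroup E] [InnerProductSpace ℝ E] {F : E → E} {c K : ℝ}

lemma norm_sub_smul_sub_le_of_strongly_monotone (hc : 0 ≤ c) (hK : 0 < K) (hcK : c ≤ K)
    (hmono : ∀ x y, c * ‖x - y‖ ^ 2 ≤ ⟪F x - F y, x - y⟫)
    (hlip : ∀ x y, ‖F x - F y‖ ≤ K * ‖x - y‖) (x y : E) :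
    ‖(x - (c / K ^ 2) • F x) - (y - (c / K ^ 2) • F y)‖ ≤
      Real.sqrt (1 - c ^ 2 / K ^ 2) * ‖x - y‖ := by
  have hF : ‖F x - F y‖ ^ 2 ≤ K ^ 2 * ‖x - y‖ ^ 2 := by
    rw [← mul_pow]; gcongr; exact hlip x y
  have hsq : ‖(x - y) - (c / K ^ 2) • (F x - F y)‖ ^ 2 ≤ (1 - c ^ 2 / K ^ 2) * ‖x - y‖ ^ 2 := by
    rw [norm_sub_sq_real, real_inner_smul_right, norm_smul, Real.norm_of_nonneg (by positivity),
      mul_pow, real_inner_comm]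
    calc ‖x - y‖ ^ 2 - 2 * (c / K ^ 2 * ⟪F x - F y, x - y⟫) + (c / K ^ 2) ^ 2 * ‖F x - F y‖ ^ 2
        ≤ ‖x - y‖ ^ 2 - 2 * (c / K ^ 2 * (c * ‖x - y‖ ^ 2))
            + (c / K ^ 2) ^ 2 * (K ^ 2 * ‖x - y‖ ^ 2) := by
          gcongr; exact hmono x y
      _ = (1 - c ^ 2 / K ^ 2) * ‖x - y‖ ^ 2 := by field_simp; ring
  rw [show (x - (c / K ^ 2) • F x) - (y - (c / K ^ 2) • F y)
      = (x - y) - (c / K ^ 2) • (F x - F y) by module]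
  refine le_of_sq_le_sq ?_ (by positivity)
  rwa [mul_pow, Real.sq_sqrt (by rw [sub_nonneg, div_le_one (by positivity)]; gcongr)]

theorem exists_unique_zero_of_strongly_monotone [CompleteSpace E] {M : ℝ} (hc : 0 < c)
    (hmono : ∀ x y, c * ‖x - y‖ ^ 2 ≤ ⟪F x - F y, x - y⟫)
    (hlip : ∀ x y, ‖F x - F y‖ ≤ M * ‖x - y‖) : ∃! x, F x = 0 := by
  set K := max M c
  have hcK : c ≤ K := le_max_right M c
  have hK : 0 < K := hc.trans_le hcK
  have hk1 : Real.sqrt (1 - c ^ 2 / K ^ 2) < 1 := by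
    rw [Real.sqrt_lt' one_pos, one_pow, sub_lt_self_iff]; positivity
  have hcontr : ContractingWith ⟨_, Real.sqrt_nonneg (1 - c ^ 2 / K ^ 2)⟩
      (fun x => x - (c / K ^ 2) • F x) :=
    ⟨hk1, LipschitzWith.of_dist_le_mul fun x y => by
      rw [dist_eq_norm, dist_eq_norm]
      exact norm_sub_smul_sub_le_of_strongly_monotone hc.le hK hcK hmono
        (fun x y => (hlip x y).trans (by gcongr; exact le_max_left M c)) x y⟩
  obtain ⟨x, hx⟩ : ∃ x, x - (c / K ^ 2) • F x = x := ⟨_, hcontr.fixedPoint_isFixedPt⟩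
  have hFx : F x = 0 := by
    rwa [sub_eq_self, smul_eq_zero, or_iff_right (by positivity)] at hx
  refine ⟨x, hFx, fun y hFy => ?_⟩
  have := hmono y x
  rw [hFy, hFx, sub_self, inner_zero_left] at this
  have : ‖y - x‖ ^ 2 ≤ 0 := by nlinarith
  rwa [sq_nonpos_iff, norm_eq_zero, sub_eq_zero] at this

end StronglyMonotone

theorem exists_unique_zero_of_dotProduct_ge {n : ℕ} {L : (Fin n → ℝ) → (Fin n → ℝ)} {c M : ℝ}
    (hc : 0 < c) (hmono : ∀ α β, (L α - L β) ⬝ᵥ (α - β) ≥ c * ((α - β) ⬝ᵥ (α - β)))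
    (hlip : ∀ α β, euNorm (L α - L β) ≤ M * euNorm (α - β)) : ∃! α, L α = 0 := by
  obtain ⟨v, hv, huniq⟩ := exists_unique_zero_of_strongly_monotone
    (F := fun v : EuclideanSpace ℝ (Fin n) => WithLp.toLp 2 (L v.ofLp)) hc
    (fun u v => by
      have := hmono u.ofLp v.ofLp
      rwa [ge_iff_le, ← euNorm_sq, euNorm_eq_norm_toLp, dotProduct_eq_inner_toLp, WithLp.toLp_sub,
        WithLp.toLp_sub, WithLp.toLp_ofLp, WithLp.toLp_ofLp] at this)
    (fun u v => by simpa [euNorm_eq_norm_toLp] using hlip u.ofLp v.ofLp)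
  refine ⟨v.ofLp, by simpa using hv, fun α hα => ?_⟩
  rw [← huniq (WithLp.toLp 2 α) (by simp [hα])]

section Prox

open Filter Topology

variable {N : ℕ} {h : (Fin N → ℝ) → EReal} {M : Matrix (Fin N) (Fin N) ℝ}

lemma Matrix.IsSymm.dotProduct_mulVec_comm (hM : M.IsSymm) (x y : Fin N → ℝ) :
    x ⬝ᵥ (M *ᵥ y) = y ⬝ᵥ (M *ᵥ x) := by
  rw [← dotProduct_transpose_mulVec, hM.eq]

lemma Matrix.IsSymm.dotProduct_mulVec_sub (hM : M.IsSymm) (x y : Fin N → ℝ) :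
    (x - y) ⬝ᵥ (M *ᵥ (x - y)) = x ⬝ᵥ (M *ᵥ x) - 2 * (x ⬝ᵥ (M *ᵥ y)) + y ⬝ᵥ (M *ᵥ y) := by
  rw [mulVec_sub, dotProduct_sub, sub_dotProduct, sub_dotProduct, hM.dotProduct_mulVec_comm y x]
  ring

lemma Matrix.PosSemidef.isSymm (hM : M.PosSemidef) : M.IsSymm :=
  isHermitian_iff_isSymm.1 hM.isHermitian

lemma Gamma0.exists_eq_coe (hh : Gamma0 h) {p : Fin N → ℝ} (hp : h p ≠ ⊤) : ∃ a : ℝ, h p = a :=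
  ⟨(h p).toReal, (EReal.coe_toReal hp (hh.2.1 p)).symm⟩

variable {w p : Fin N → ℝ}

lemma IsProxPt.ne_top_s3 (hproper : ∃ z, h z ≠ ⊤) (hp : IsProxPt M h w p) : h p ≠ ⊤ := by
  obtain ⟨z, hz⟩ := hproper
  intro htop
  have := hp z
  rw [htop, EReal.top_add_of_ne_bot (EReal.coe_ne_bot _), top_le_iff] at this
  exact EReal.add_ne_top hz (EReal.coe_ne_top _) this

lemma IsProxPt.coe_le (hp : IsProxPt M h w p) {z : Fin N → ℝ} {a b : ℝ} (hpa : h p = a)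
    (hzb : h z ≤ b) :
    a + 1 / 2 * ((w - p) ⬝ᵥ (M *ᵥ (w - p))) ≤ b + 1 / 2 * ((w - z) ⬝ᵥ (M *ᵥ (w - z))) := by
  have := (hp z).trans (add_le_add hzb le_rfl)
  rw [hpa] at this
  exact_mod_cast this

lemma IsProxPt.dotProduct_le (hh : Gamma0 h) (hM : M.IsSymm) (hp : IsProxPt M h w p)
    {z : Fin N → ℝ} {a b : ℝ} (hpa : h p = a) (hzb : h z = b) :
    (w - p) ⬝ᵥ (M *ᵥ (z - p)) ≤ b - a := by
  set C := (z - p) ⬝ᵥ (M *ᵥ (z - p))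
  -- compare `p` with the points `p + t (z - p)` of the segment `[p, z]`
  have hseg : ∀ t ∈ Set.Ioc (0 : ℝ) 1, (w - p) ⬝ᵥ (M *ᵥ (z - p)) ≤ b - a + t / 2 * C := by
    rintro t ⟨ht0, ht1⟩
    have hconv : h (t • z + (1 - t) • p) ≤ ((t * b + (1 - t) * a : ℝ) : EReal) := by
      have := hh.2.2.2 z p t ht0.le ht1
      rw [hzb, hpa] at this
      exact_mod_cast this
    have hineq := hp.coe_le hpa hconv
    rw [show w - (t • z + (1 - t) • p) = (w - p) - t • (z - p) by module,
      hM.dotProduct_mulVec_sub (w - p), mulVec_smul, dotProduct_smul, smul_dotProduct,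
      dotProduct_smul, smul_eq_mul, smul_eq_mul, smul_eq_mul] at hineq
    refine le_of_mul_le_mul_left ?_ ht0
    nlinarith
  have hlim : Tendsto (fun t : ℝ => b - a + t / 2 * C) (𝓝[>] 0) (𝓝 (b - a)) := by
    exact tendsto_nhdsWithin_of_tendsto_nhds
      ((by fun_prop : Continuous fun t : ℝ => b - a + t / 2 * C).tendsto' 0 _ (by simp))
  exact ge_of_tendsto hlim (mem_of_superset (Ioc_mem_nhdsGT one_pos) hseg)

lemma isProxPt_of_dotProduct_le (hbot : ∀ z, h z ≠ ⊥) (hM : M.PosSemidef) {a : ℝ}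
    (hpa : h p = a) (hvi : ∀ z (b : ℝ), h z = b → (w - p) ⬝ᵥ (M *ᵥ (z - p)) ≤ b - a) :
    IsProxPt M h w p := by
  intro z
  induction hz : h z with
  | bot => exact absurd hz (hbot z)
  | top => rw [EReal.top_add_of_ne_bot (EReal.coe_ne_bot _)]; exact le_top
  | coe b =>
    rw [hpa]
    norm_cast
    have hpsd : 0 ≤ (z - p) ⬝ᵥ (M *ᵥ (z - p)) := by
      simpa using hM.dotProduct_mulVec_nonneg (z - p)
    rw [show w - z = (w - p) - (z - p) by abel, hM.isSymm.dotProduct_mulVec_sub (w - p)]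
    linarith [hvi z b hz]

lemma IsProxPt.firmly_nonexpansive (hh : Gamma0 h) (hM : M.IsSymm) {w₁ w₂ p₁ p₂ : Fin N → ℝ}
    (hp₁ : IsProxPt M h w₁ p₁) (hp₂ : IsProxPt M h w₂ p₂) :
    (p₁ - p₂) ⬝ᵥ (M *ᵥ (p₁ - p₂)) ≤ (w₁ - w₂) ⬝ᵥ (M *ᵥ (p₁ - p₂)) := by
  obtain ⟨a₁, ha₁⟩ := hh.exists_eq_coe (hp₁.ne_top_s3 hh.1)
  obtain ⟨a₂, ha₂⟩ := hh.exists_eq_coe (hp₂.ne_top_s3 hh.1)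
  have h₁ := hp₁.dotProduct_le hh hM ha₁ ha₂
  have h₂ := hp₂.dotProduct_le hh hM ha₂ ha₁
  rw [← neg_sub p₁ p₂, mulVec_neg, dotProduct_neg] at h₁
  have hsplit : (w₁ - w₂) ⬝ᵥ (M *ᵥ (p₁ - p₂)) - (p₁ - p₂) ⬝ᵥ (M *ᵥ (p₁ - p₂)) =
      (w₁ - p₁) ⬝ᵥ (M *ᵥ (p₁ - p₂)) - (w₂ - p₂) ⬝ᵥ (M *ᵥ (p₁ - p₂)) := by
    rw [← sub_dotProduct, ← sub_dotProduct]
    congr 1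
    abel
  linarith

lemma IsProxPt.of_mulVec_eq (hh : Gamma0 h) (hM : M.IsSymm) {M' : Matrix (Fin N) (Fin N) ℝ}
    (hM' : M'.PosSemidef) {x : Fin N → ℝ} (hp : IsProxPt M h w p)
    (hwx : M *ᵥ (w - p) = M' *ᵥ (x - p)) : IsProxPt M' h x p := by
  obtain ⟨a, ha⟩ := hh.exists_eq_coe (hp.ne_top_s3 hh.1)
  refine isProxPt_of_dotProduct_le hh.2.1 hM' ha fun z b hb => ?_
  have := hp.dotProduct_le hh hM ha hb
  rwa [hM.dotProduct_mulVec_comm, hwx, ← hM'.isSymm.dotProduct_mulVec_comm] at this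

end Prox

section Estimates

variable {m n : ℕ} {B : Matrix (Fin m) (Fin n) ℝ} {d : Fin n → ℝ} {s : Fin m → ℝ}

lemma euNorm_le_matOpNorm_mul_of_dotProduct_self_le (hs : s ⬝ᵥ s ≤ (B *ᵥ d) ⬝ᵥ s) :
    euNorm s ≤ matOpNorm B * euNorm d := by
  have hsq : euNorm s ^ 2 ≤ matOpNorm B * euNorm d * euNorm s := by
    rw [euNorm_sq]
    calc s ⬝ᵥ s ≤ (B *ᵥ d) ⬝ᵥ s := hs
      _ ≤ euNorm (B *ᵥ d) * euNorm s := dotProduct_le_euNorm_mul _ _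
      _ ≤ matOpNorm B * euNorm d * euNorm s :=
        mul_le_mul_of_nonneg_right (euNorm_mulVec_le B d) (euNorm_nonneg s)
  nlinarith [euNorm_nonneg s, mul_nonneg (matOpNorm_nonneg B) (euNorm_nonneg d)]

lemma dotProduct_sub_transpose_mulVec_ge (hs : s ⬝ᵥ s ≤ (B *ᵥ d) ⬝ᵥ s) :
    (d - Bᵀ *ᵥ s) ⬝ᵥ d ≥ (1 - matOpNorm B ^ 2) * (d ⬝ᵥ d) := by
  have hsd : s ⬝ᵥ (B *ᵥ d) ≤ matOpNorm B ^ 2 * (d ⬝ᵥ d) :=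
    calc s ⬝ᵥ (B *ᵥ d) ≤ euNorm s * euNorm (B *ᵥ d) := dotProduct_le_euNorm_mul _ _
      _ ≤ (matOpNorm B * euNorm d) * (matOpNorm B * euNorm d) :=
        mul_le_mul (euNorm_le_matOpNorm_mul_of_dotProduct_self_le hs) (euNorm_mulVec_le B d)
          (euNorm_nonneg _) (mul_nonneg (matOpNorm_nonneg B) (euNorm_nonneg d))
      _ = matOpNorm B ^ 2 * (d ⬝ᵥ d) := by rw [← euNorm_sq]; ring
  rw [sub_dotProduct, dotProduct_comm (Bᵀ *ᵥ s), dotProduct_transpose_mulVec]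
  linarith

lemma euNorm_sub_transpose_mulVec_le (hs : s ⬝ᵥ s ≤ (B *ᵥ d) ⬝ᵥ s) :
    euNorm (d - Bᵀ *ᵥ s) ≤ (1 + matOpNorm B ^ 2) * euNorm d :=
  calc euNorm (d - Bᵀ *ᵥ s) ≤ euNorm d + matOpNorm Bᵀ * euNorm s :=
        (euNorm_sub_le _ _).trans (by gcongr; exact euNorm_mulVec_le _ _)
    _ ≤ euNorm d + matOpNorm B * (matOpNorm B * euNorm d) := by
        rw [matOpNorm_transpose]
        gcongr
        · exact matOpNorm_nonneg B
        · exact euNorm_le_matOpNorm_mul_of_dotProduct_self_le hs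
    _ = (1 + matOpNorm B ^ 2) * euNorm d := by ring

end Estimates

section SquareRoot

variable {N r : ℕ} {S : Matrix (Fin N) (Fin N) ℝ}

lemma Matrix.IsSymm.dotProduct_mul_self_mulVec (hS : S.IsSymm) (x y : Fin N → ℝ) :
    x ⬝ᵥ ((S * S) *ᵥ y) = (S *ᵥ x) ⬝ᵥ (S *ᵥ y) := by
  rw [← mulVec_mulVec, ← dotProduct_transpose_mulVec, hS.eq, dotProduct_comm]

lemma euNorm_transpose_inv_mul_mulVec_lt (hS : S.IsSymm) (hSdet : IsUnit S.det)
    {U : Matrix (Fin N) (Fin r) ℝ} (hV : (S * S - U * Uᵀ).PosDef) {w : Fin N → ℝ} (hw : w ≠ 0) :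
    euNorm ((S⁻¹ * U)ᵀ *ᵥ w) < euNorm w := by
  set y := S⁻¹ *ᵥ w
  have hSy : S *ᵥ y = w := by rw [mulVec_mulVec, mul_nonsing_inv _ hSdet, one_mulVec]
  have hy : y ≠ 0 := by rintro hy; rw [hy, mulVec_zero] at hSy; exact hw hSy.symm
  have hUy : (S⁻¹ * U)ᵀ *ᵥ w = Uᵀ *ᵥ y := by
    rw [transpose_mul, ← mulVec_mulVec, transpose_nonsing_inv, hS.eq]
  have hpos : 0 < y ⬝ᵥ ((S * S - U * Uᵀ) *ᵥ y) := by
    simpa using hV.dotProduct_mulVec_pos hy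
  rw [sub_mulVec, dotProduct_sub, hS.dotProduct_mul_self_mulVec, hSy, ← mulVec_mulVec,
    ← dotProduct_transpose_mulVec, ← hUy] at hpos
  exact euNorm_lt_euNorm_of_dotProduct_self_lt (by linarith)

lemma matOpNorm_inv_mul_lt_one (hS : S.IsSymm) (hSdet : IsUnit S.det)
    {U : Matrix (Fin N) (Fin r) ℝ} (hV : (S * S - U * Uᵀ).PosDef) : matOpNorm (S⁻¹ * U) < 1 := by
  rw [← matOpNorm_transpose]
  exact matOpNorm_lt_one fun w hw => euNorm_transpose_inv_mul_mulVec_lt hS hSdet hV hw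

lemma IsProxPt.firmly_nonexpansive_mul_self {h : (Fin N → ℝ) → EReal} (hh : Gamma0 h)
    (hS : S.IsSymm) {w₁ w₂ p₁ p₂ : Fin N → ℝ} (hp₁ : IsProxPt (S * S) h w₁ p₁)
    (hp₂ : IsProxPt (S * S) h w₂ p₂) :
    (S *ᵥ (p₁ - p₂)) ⬝ᵥ (S *ᵥ (p₁ - p₂)) ≤ (S *ᵥ (w₁ - w₂)) ⬝ᵥ (S *ᵥ (p₁ - p₂)) := by
  have hSS : (S * S).IsSymm := by rw [Matrix.IsSymm, transpose_mul, hS.eq]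
  simpa only [hS.dotProduct_mul_self_mulVec] using hp₁.firmly_nonexpansive hh hSS hp₂

lemma mulVec_inv_mul_self_mulVec (hSdet : IsUnit S.det) (U : Matrix (Fin N) (Fin r) ℝ)
    (v : Fin r → ℝ) : S *ᵥ ((S * S)⁻¹ *ᵥ (U *ᵥ v)) = (S⁻¹ * U) *ᵥ v := by
  rw [mulVec_mulVec, mulVec_mulVec, Matrix.mul_inv_rev, mul_nonsing_inv_cancel_left _ _ hSdet]

lemma transpose_inv_mul_mulVec_mulVec (hS : S.IsSymm) (hSdet : IsUnit S.det)
    (U : Matrix (Fin N) (Fin r) ℝ) (v : Fin N → ℝ) : (S⁻¹ * U)ᵀ *ᵥ (S *ᵥ v) = Uᵀ *ᵥ v := by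
  rw [mulVec_mulVec, transpose_mul, transpose_nonsing_inv, hS.eq, Matrix.mul_assoc,
    nonsing_inv_mul _ hSdet, Matrix.mul_one]

end SquareRoot

lemma mulVec_add_inv_mulVec_sub {N r : ℕ} {P : Matrix (Fin N) (Fin N) ℝ} (hP : IsUnit P.det)
    (U : Matrix (Fin N) (Fin r) ℝ) {x p : Fin N → ℝ} {α : Fin r → ℝ}
    (hα : Uᵀ *ᵥ (x - p) + α = 0) :
    P *ᵥ (x + P⁻¹ *ᵥ (U *ᵥ α) - p) = (P - U * Uᵀ) *ᵥ (x - p) := by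
  rw [add_sub_right_comm, mulVec_add, mulVec_mulVec, mul_nonsing_inv _ hP, one_mulVec,
    eq_neg_of_add_eq_zero_right hα, mulVec_neg, mulVec_mulVec, sub_mulVec, ← sub_eq_add_neg]

theorem stmt_3_general {N r : ℕ}
    (h : (Fin N → ℝ) → EReal) (hh : Gamma0 h)
    (P : Matrix (Fin N) (Fin N) ℝ) (hP : P.PosDef)
    (U : Matrix (Fin N) (Fin r) ℝ)
    (S : Matrix (Fin N) (Fin N) ℝ) (hS : S.PosSemidef) (hSsq : S * S = P)
    (V : Matrix (Fin N) (Fin N) ℝ) (hV : V = P - U * Uᵀ) (hVpd : V.PosDef)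
    (proxP : (Fin N → ℝ) → (Fin N → ℝ))
    (hproxP : ∀ w : Fin N → ℝ, IsProxPt P h w (proxP w))
    (x : Fin N → ℝ)
    (L : (Fin r → ℝ) → (Fin r → ℝ))
    (hL : ∀ α : Fin r → ℝ, L α = Uᵀ *ᵥ (x - proxP (x + P⁻¹ *ᵥ (U *ᵥ α))) + α) :
    matOpNorm (S⁻¹ * U) ^ 2 < 1 ∧
    (∀ α β : Fin r → ℝ,
        euNorm (L α - L β) ≤ (1 + matOpNorm (S⁻¹ * U) ^ 2) * euNorm (α - β)) ∧
    (∀ α β : Fin r → ℝ,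
        (L α - L β) ⬝ᵥ (α - β) ≥ (1 - matOpNorm (S⁻¹ * U) ^ 2) * ((α - β) ⬝ᵥ (α - β))) ∧
    (∃! αs : Fin r → ℝ, L αs = 0) ∧
    (∀ αs : Fin r → ℝ, L αs = 0 →
        IsProxPt V h x (proxP (x + P⁻¹ *ᵥ (U *ᵥ αs)))) := by
  subst hSsq hV
  have hSdet : IsUnit S.det :=
    isUnit_iff_ne_zero.2 fun h0 => hP.det_pos.ne' (by rw [det_mul, h0, zero_mul])
  have hB : matOpNorm (S⁻¹ * U) < 1 := matOpNorm_inv_mul_lt_one hS.isSymm hSdet hVpd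
  set p := fun α => proxP (x + (S * S)⁻¹ *ᵥ (U *ᵥ α))
  have hprox : ∀ α, IsProxPt (S * S) h (x + (S * S)⁻¹ *ᵥ (U *ᵥ α)) (p α) := fun α => hproxP _
  have hfirm : ∀ α β, (S *ᵥ (p α - p β)) ⬝ᵥ (S *ᵥ (p α - p β)) ≤
      ((S⁻¹ * U) *ᵥ (α - β)) ⬝ᵥ (S *ᵥ (p α - p β)) := fun α β => by
    have := (hprox α).firmly_nonexpansive_mul_self hh hS.isSymm (hprox β)
    rwa [add_sub_add_left_eq_sub, ← mulVec_sub, ← mulVec_sub,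
      mulVec_inv_mul_self_mulVec hSdet] at this
  have hLsub : ∀ α β, L α - L β = (α - β) - (S⁻¹ * U)ᵀ *ᵥ (S *ᵥ (p α - p β)) := fun α β => by
    rw [transpose_inv_mul_mulVec_mulVec hS.isSymm hSdet, hL, hL, mulVec_sub, mulVec_sub,
      mulVec_sub]
    abel
  have hlip : ∀ α β, euNorm (L α - L β) ≤ (1 + matOpNorm (S⁻¹ * U) ^ 2) * euNorm (α - β) :=
    fun α β => hLsub α β ▸ euNorm_sub_transpose_mulVec_le (hfirm α β)
  have hmono : ∀ α β,
      (L α - L β) ⬝ᵥ (α - β) ≥ (1 - matOpNorm (S⁻¹ * U) ^ 2) * ((α - β) ⬝ᵥ (α - β)) :=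
    fun α β => hLsub α β ▸ dotProduct_sub_transpose_mulVec_ge (hfirm α β)
  have hγ : matOpNorm (S⁻¹ * U) ^ 2 < 1 := by nlinarith [matOpNorm_nonneg (S⁻¹ * U)]
  refine ⟨hγ, hlip, hmono, exists_unique_zero_of_dotProduct_ge (sub_pos.2 hγ) hmono hlip,
    fun αs hαs => (hprox αs).of_mulVec_eq hh hP.posSemidef.isSymm hVpd.posSemidef
      (mulVec_add_inv_mulVec_sub hP.det_pos.ne'.isUnit U ((hL αs).symm.trans hαs))⟩

/-- Proximity operator in the metric `V = P - U Uᵀ` (assumed SPD):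
`‖P^{-1/2}U‖² < 1`, and the map `L(α) = Uᵀ(x - prox^P_h(x + P⁻¹ U α)) + α` is
Lipschitz with constant `1 + ‖P^{-1/2} U‖²`, strongly monotone with modulus
`c = 1 - ‖P^{-1/2} U‖² > 0`, has a unique zero `α*`, and
`prox^V_h(x) = prox^P_h(x + P⁻¹ U α*)`.  (`S` is the principal square root of `P`.) -/
theorem stmt_3 {N r : ℕ} (hr : r ≤ N)
    (h : (Fin N → ℝ) → EReal) (hh : Gamma0 h)
    (P : Matrix (Fin N) (Fin N) ℝ) (hP : P.PosDef)
    (U : Matrix (Fin N) (Fin r) ℝ)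
    (hU : LinearIndependent ℝ (fun j : Fin r => fun i : Fin N => U i j))
    (S : Matrix (Fin N) (Fin N) ℝ) (hS : S.PosSemidef) (hSsq : S * S = P)
    (V : Matrix (Fin N) (Fin N) ℝ) (hV : V = P - U * Uᵀ) (hVpd : V.PosDef)
    (proxP : (Fin N → ℝ) → (Fin N → ℝ))
    (hproxP : ∀ w : Fin N → ℝ, IsProxPt P h w (proxP w))
    (x : Fin N → ℝ)
    (L : (Fin r → ℝ) → (Fin r → ℝ))
    (hL : ∀ α : Fin r → ℝ, L α = Uᵀ *ᵥ (x - proxP (x + P⁻¹ *ᵥ (U *ᵥ α))) + α) :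
    matOpNorm (S⁻¹ * U) ^ 2 < 1 ∧
    (∀ α β : Fin r → ℝ,
        euNorm (L α - L β) ≤ (1 + matOpNorm (S⁻¹ * U) ^ 2) * euNorm (α - β)) ∧
    (∀ α β : Fin r → ℝ,
        (L α - L β) ⬝ᵥ (α - β) ≥ (1 - matOpNorm (S⁻¹ * U) ^ 2) * ((α - β) ⬝ᵥ (α - β))) ∧
    (∃! αs : Fin r → ℝ, L αs = 0) ∧
    (∀ αs : Fin r → ℝ, L αs = 0 →
        IsProxPt V h x (proxP (x + P⁻¹ *ᵥ (U *ᵥ αs)))) :=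
  stmt_3_general h hh P hP U S hS hSsq V hV hVpd proxP hproxP x L hL
end
end

section
/- Let h ∈ Γ₀(ℝ^N), let D be a diagonal N×N matrix with strictly positive diagonal entries d₁,…,d_N, let u ∈ ℝ^N with u ≠ 0, and assume V = D + u u^T (respectively V = D − u u^T) is symmetric positive definite. Then for every x ∈ ℝ^N, prox^V_h(x) = D^{-1/2}( prox_{h∘D^{-1/2}}( D^{1/2}( x − α* D^{-1} u ) ) ) (respectively with x + α* D^{-1} u), where α* is the unique real root of the function L(α) = ⟨u, x − D^{-1/2}( prox_{h∘D^{-1/2}}( D^{1/2}( x ∓ α D^{-1} u ) ) )⟩ + α (sign − for V = D + u u^T, sign + for V = D − u u^T), and L is strongly increasing and Lipschitz continuous on ℝ with Lipschitz constant 1 + Σ_{i=1}^N u_i²/d_i. -/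
/-!
In the coordinates `w = D^{1/2} y` the `V`-prox problem for `h` becomes a prox problem for
`g = h ∘ D^{-1/2}` in the metric `Id + ε v vᵀ`, `v = D^{-1/2} u`, and `L` becomes
`M α = ⟪v, w₀ - prox_g (w₀ - ε α v)⟫ + α` with `w₀ = D^{1/2} x`.

Since `prox_g` is firmly nonexpansive, the increment
`T = ⟪v, prox_g (w₀ - ε a v) - prox_g (w₀ - ε b v)⟫` satisfies
`T² ≤ ‖v‖² ‖Δ prox_g‖² ≤ ‖v‖² ε (b - a) T`. Hence `M` is Lipschitz, and strongly
increasing as soon as `1 + ε ‖v‖² > 0`, which is what positive definiteness of `V` says; so `M`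
has exactly one root. At a root `α`, the three-point inequality for `p = prox_g (w₀ - ε α v)`
together with `⟪v, w₀ - p⟫ = -α` rearranges to the optimality of `p` in the metric `Id + ε v vᵀ`,
the slack being `‖z - p‖² + ε ⟪v, z - p⟫² ≥ 0`.
-/

open Matrix

noncomputable section

open Filter Topology
open scoped RealInnerProductSpace

theorem existsUnique_eq_zero_of_strongly_increasing {f : ℝ → ℝ} {c : ℝ} (hf : Continuous f)
    (hc : 0 < c) (H : ∀ a b, c * (a - b) ^ 2 ≤ (f a - f b) * (a - b)) : ∃! a, f a = 0 := by
  have above : ∀ a, 0 < a → f 0 + c * a ≤ f a := fun a ha => by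
    have := H a 0
    rw [sub_zero, sq] at this
    nlinarith
  have below : ∀ a, a < 0 → f a ≤ f 0 + c * a := fun a ha => by
    have := H a 0
    rw [sub_zero, sq] at this
    nlinarith
  have h_top : Tendsto f atTop atTop :=
    tendsto_atTop_mono' _ (eventually_gt_atTop 0 |>.mono above)
      (tendsto_atTop_add_const_left _ _ (tendsto_id.const_mul_atTop hc))
  have h_bot : Tendsto f atBot atBot :=
    tendsto_atBot_mono' _ (eventually_lt_atBot 0 |>.mono below)
      (tendsto_atBot_add_const_left _ _ (tendsto_id.const_mul_atBot hc))
  obtain ⟨a, ha⟩ := hf.surjective h_top h_bot 0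
  refine ⟨a, ha, fun b hb => ?_⟩
  have := H b a
  rw [ha, hb, sub_zero, zero_mul] at this
  have hsq : (b - a) ^ 2 = 0 := by nlinarith [sq_nonneg (b - a)]
  exact sub_eq_zero.1 (pow_eq_zero_iff two_ne_zero |>.1 hsq)

theorem le_of_forall_add_one_sub_mul_le {A B C : ℝ}
    (H : ∀ t ∈ Set.Ioc (0 : ℝ) 1, A + (1 - t) * C ≤ B) : A + C ≤ B := by
  have hlim : Tendsto (fun t : ℝ => A + (1 - t) * C) (𝓝[>] 0) (𝓝 (A + C)) := by
    have : Continuous fun t : ℝ => A + (1 - t) * C := by fun_prop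
    simpa using this.tendsto 0 |>.mono_left nhdsWithin_le_nhds
  exact le_of_tendsto hlim (eventually_of_mem (Ioc_mem_nhdsGT one_pos) H)

theorem EReal.add_coe_le_add_coe_iff {a b : EReal} (ha : a ≠ ⊤) (ha' : a ≠ ⊥) (hb : b ≠ ⊤)
    (hb' : b ≠ ⊥) {r s : ℝ} : a + r ≤ b + s ↔ a.toReal + r ≤ b.toReal + s := by
  lift a to ℝ using ⟨ha, ha'⟩
  lift b to ℝ using ⟨hb, hb'⟩
  norm_cast

section ProxPt

variable {F G : Type*} [AddCommGroup F] [Module ℝ F] [AddCommGroup G] [Module ℝ G]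

def IsProxPtWith (q : F → ℝ) (g : F → EReal) (x p : F) : Prop :=
  ∀ z, g p + ((1 / 2 * q (x - p) : ℝ) : EReal) ≤ g z + ((1 / 2 * q (x - z) : ℝ) : EReal)

structure IsProperConvex (g : F → EReal) : Prop where
  exists_ne_top : ∃ z, g z ≠ ⊤
  ne_bot : ∀ z, g z ≠ ⊥
  le_comb : ∀ x y : F, ∀ t : ℝ, 0 ≤ t → t ≤ 1 →
    g (t • x + (1 - t) • y) ≤ (t : EReal) * g x + ((1 - t : ℝ) : EReal) * g y

theorem isProxPt_iff_isProxPtWith {N : ℕ} {V : Matrix (Fin N) (Fin N) ℝ}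
    {h : (Fin N → ℝ) → EReal} {x p : Fin N → ℝ} :
    IsProxPt V h x p ↔ IsProxPtWith (fun y => y ⬝ᵥ (V *ᵥ y)) h x p :=
  Iff.rfl

theorem Gamma0.isProperConvex {N : ℕ} {h : (Fin N → ℝ) → EReal} (hh : Gamma0 h) :
    IsProperConvex h :=
  ⟨hh.1, hh.2.1, hh.2.2.2⟩

variable {g : F → EReal} {q : F → ℝ} {x p : F}

theorem IsProperConvex.comp_linearEquiv (hg : IsProperConvex g) (Φ : G ≃ₗ[ℝ] F) :
    IsProperConvex (g ∘ Φ) where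
  exists_ne_top := by
    obtain ⟨z, hz⟩ := hg.exists_ne_top
    exact ⟨Φ.symm z, by simpa using hz⟩
  ne_bot z := hg.ne_bot (Φ z)
  le_comb y z t ht₀ ht₁ := by simpa using hg.le_comb (Φ y) (Φ z) t ht₀ ht₁

theorem IsProxPtWith.comp_linearMap {q' : G → ℝ} {x p : G} (Φ : G →ₗ[ℝ] F)
    (hq : ∀ y, q (Φ y) = q' y) (hp : IsProxPtWith q g (Φ x) (Φ p)) :
    IsProxPtWith q' (g ∘ Φ) x p := fun z => by
  simpa only [Function.comp, ← map_sub, hq] using hp (Φ z)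

theorem IsProxPtWith.ne_top (hg : IsProperConvex g) (hp : IsProxPtWith q g x p) : g p ≠ ⊤ := by
  intro hp_top
  obtain ⟨z, hz⟩ := hg.exists_ne_top
  have := hp z
  lift g z to ℝ using ⟨hz, hg.ne_bot z⟩ with r
  rw [hp_top, EReal.top_add_coe, ← EReal.coe_add, top_le_iff] at this
  exact EReal.coe_ne_top _ this

end ProxPt

section Euclid

variable {E : Type*} [NormedAddCommGroup E] [InnerProductSpace ℝ E] {g : E → EReal}

theorem norm_sub_convex_comb_sq (w z p : E) (t : ℝ) :
    ‖w - (t • z + (1 - t) • p)‖ ^ 2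
      = (1 - t) * ‖w - p‖ ^ 2 + t * ‖w - z‖ ^ 2 - t * (1 - t) * ‖z - p‖ ^ 2 := by
  have : w - (t • z + (1 - t) • p) = (w - p) - t • (z - p) := by module
  rw [this, show w - z = (w - p) - (z - p) by abel]
  simp only [norm_sub_sq_real, norm_smul, inner_smul_right, mul_pow, Real.norm_eq_abs, sq_abs]
  ring

theorem IsProxPtWith.three_point (hg : IsProperConvex g) {w p z : E}
    (hp : IsProxPtWith (‖·‖ ^ 2) g w p) (hz : g z ≠ ⊤) :
    (g p).toReal + 1 / 2 * ‖w - p‖ ^ 2 + 1 / 2 * ‖z - p‖ ^ 2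
      ≤ (g z).toReal + 1 / 2 * ‖w - z‖ ^ 2 := by
  have hp_top := hp.ne_top hg
  obtain ⟨a, ha⟩ : ∃ a : ℝ, g z = a := ⟨_, (EReal.coe_toReal hz (hg.ne_bot z)).symm⟩
  obtain ⟨b, hb⟩ : ∃ b : ℝ, g p = b := ⟨_, (EReal.coe_toReal hp_top (hg.ne_bot p)).symm⟩
  rw [ha, hb, EReal.toReal_coe, EReal.toReal_coe]
  refine le_of_forall_add_one_sub_mul_le fun t ⟨ht₀, ht₁⟩ => ?_
  have hconv := hg.le_comb z p t ht₀.le ht₁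
  rw [ha, hb, ← EReal.coe_mul, ← EReal.coe_mul, ← EReal.coe_add] at hconv
  have hprox := (hp _).trans (add_le_add hconv le_rfl)
  beta_reduce at hprox
  rw [hb, ← EReal.coe_add, ← EReal.coe_add, EReal.coe_le_coe_iff,
    norm_sub_convex_comb_sq] at hprox
  have : t * (b + 1 / 2 * ‖w - p‖ ^ 2 + (1 - t) * (1 / 2 * ‖z - p‖ ^ 2))
      ≤ t * (a + 1 / 2 * ‖w - z‖ ^ 2) := by linarith
  exact le_of_mul_le_mul_left this ht₀

theorem IsProxPtWith.norm_sub_sq_le_inner (hg : IsProperConvex g) {w₁ w₂ p₁ p₂ : E}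
    (h₁ : IsProxPtWith (‖·‖ ^ 2) g w₁ p₁) (h₂ : IsProxPtWith (‖·‖ ^ 2) g w₂ p₂) :
    ‖p₁ - p₂‖ ^ 2 ≤ ⟪w₁ - w₂, p₁ - p₂⟫ := by
  have e₁ := h₁.three_point hg (h₂.ne_top hg)
  have e₂ := h₂.three_point hg (h₁.ne_top hg)
  have hpar : ‖w₁ - p₂‖ ^ 2 + ‖w₂ - p₁‖ ^ 2 - ‖w₁ - p₁‖ ^ 2 - ‖w₂ - p₂‖ ^ 2
      = 2 * ⟪w₁ - w₂, p₁ - p₂⟫ := by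
    simp only [norm_sub_sq_real, inner_sub_left, inner_sub_right]
    ring
  rw [norm_sub_rev p₂ p₁] at e₁
  linarith

theorem norm_sq_add_mul_inner_sq_nonneg {v : E} {ε : ℝ} (hε : 0 ≤ 1 + ε * ‖v‖ ^ 2) (y : E) :
    0 ≤ ‖y‖ ^ 2 + ε * ⟪v, y⟫ ^ 2 := by
  rcases le_or_gt 0 ε with hε₀ | hε₀
  · positivity
  have hcs : ⟪v, y⟫ ^ 2 ≤ ‖v‖ ^ 2 * ‖y‖ ^ 2 := by
    rw [← mul_pow, ← sq_abs]
    exact pow_le_pow_left₀ (abs_nonneg _) (abs_real_inner_le_norm v y) 2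
  nlinarith [mul_le_mul_of_nonpos_left hcs hε₀.le, mul_nonneg hε (sq_nonneg ‖y‖)]

section RankOne

variable (prox : E → E) (v w₀ : E) (ε : ℝ)

def proxRootFun (α : ℝ) : ℝ := ⟪v, w₀ - prox (w₀ - (ε * α) • v)⟫ + α

variable {prox v w₀ ε}

theorem proxRootFun_sub (a b : ℝ) :
    proxRootFun prox v w₀ ε a - proxRootFun prox v w₀ ε b
      = (a - b) - ⟪v, prox (w₀ - (ε * a) • v) - prox (w₀ - (ε * b) • v)⟫ := by
  simp only [proxRootFun, inner_sub_right]
  ring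

variable (hg : IsProperConvex g) (hprox : ∀ w, IsProxPtWith (‖·‖ ^ 2) g w (prox w))
include hg hprox

theorem norm_prox_sub_sq_le (a b : ℝ) :
    ‖prox (w₀ - (ε * a) • v) - prox (w₀ - (ε * b) • v)‖ ^ 2
      ≤ ε * (b - a) * ⟪v, prox (w₀ - (ε * a) • v) - prox (w₀ - (ε * b) • v)⟫ := by
  have := (hprox (w₀ - (ε * a) • v)).norm_sub_sq_le_inner hg (hprox (w₀ - (ε * b) • v))
  rwa [show (w₀ - (ε * a) • v) - (w₀ - (ε * b) • v) = (ε * (b - a)) • v by module,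
    real_inner_smul_left] at this

theorem abs_inner_prox_sub_le (a b : ℝ) :
    |⟪v, prox (w₀ - (ε * a) • v) - prox (w₀ - (ε * b) • v)⟫| ≤ |ε| * ‖v‖ ^ 2 * |a - b| := by
  set P := prox (w₀ - (ε * a) • v) - prox (w₀ - (ε * b) • v)
  set T := ⟪v, P⟫
  have hT : |T| ^ 2 ≤ (|ε| * ‖v‖ ^ 2 * |a - b|) * |T| :=
    calc |T| ^ 2 ≤ (‖v‖ * ‖P‖) ^ 2 := pow_le_pow_left₀ (abs_nonneg _) (abs_real_inner_le_norm v P) 2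
      _ = ‖v‖ ^ 2 * ‖P‖ ^ 2 := mul_pow _ _ _
      _ ≤ ‖v‖ ^ 2 * (ε * (b - a) * T) := by gcongr; exact norm_prox_sub_sq_le hg hprox a b
      _ ≤ ‖v‖ ^ 2 * |ε * (b - a) * T| := by gcongr; exact le_abs_self _
      _ = (|ε| * ‖v‖ ^ 2 * |a - b|) * |T| := by rw [abs_mul, abs_mul, abs_sub_comm]; ring
  rcases (abs_nonneg T).eq_or_lt with h0 | hpos
  · rw [← h0]; positivity
  · exact le_of_mul_le_mul_right (by rwa [← sq]) hpos

theorem abs_proxRootFun_sub_le (a b : ℝ) :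
    |proxRootFun prox v w₀ ε a - proxRootFun prox v w₀ ε b| ≤ (1 + |ε| * ‖v‖ ^ 2) * |a - b| := by
  rw [proxRootFun_sub]
  linarith [abs_sub (a - b) ⟪v, prox (w₀ - (ε * a) • v) - prox (w₀ - (ε * b) • v)⟫,
    abs_inner_prox_sub_le (v := v) (w₀ := w₀) (ε := ε) hg hprox a b]

theorem continuous_proxRootFun : Continuous (proxRootFun prox v w₀ ε) :=
  (LipschitzWith.of_dist_le_mul (K := ⟨1 + |ε| * ‖v‖ ^ 2, by positivity⟩) fun a b => by
    rw [Real.dist_eq, Real.dist_eq]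
    exact abs_proxRootFun_sub_le hg hprox a b).continuous

theorem min_mul_sq_le_proxRootFun_sub_mul (a b : ℝ) :
    min 1 (1 + ε * ‖v‖ ^ 2) * (a - b) ^ 2
      ≤ (proxRootFun prox v w₀ ε a - proxRootFun prox v w₀ ε b) * (a - b) := by
  rw [proxRootFun_sub]
  set T := ⟪v, prox (w₀ - (ε * a) • v) - prox (w₀ - (ε * b) • v)⟫
  have hT := abs_inner_prox_sub_le (v := v) (w₀ := w₀) (ε := ε) hg hprox a b
  rcases lt_trichotomy ε 0 with hε | rfl | hε
  · have : T * (a - b) ≤ -ε * ‖v‖ ^ 2 * (a - b) ^ 2 := by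
      calc T * (a - b) ≤ |T * (a - b)| := le_abs_self _
        _ = |T| * |a - b| := abs_mul _ _
        _ ≤ |ε| * ‖v‖ ^ 2 * |a - b| * |a - b| := by gcongr
        _ = -ε * ‖v‖ ^ 2 * (a - b) ^ 2 := by rw [abs_of_neg hε, mul_assoc _ |a - b|, ← sq, sq_abs]
    nlinarith [min_le_right 1 (1 + ε * ‖v‖ ^ 2), sq_nonneg (a - b)]
  · simp [T, sq]
  · have h0 : 0 ≤ ε * ((b - a) * T) := by
      rw [← mul_assoc]; exact (sq_nonneg _).trans (norm_prox_sub_sq_le hg hprox a b)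
    have : T * (a - b) ≤ 0 := by nlinarith [(mul_nonneg_iff_of_pos_left hε).1 h0]
    nlinarith [min_le_left 1 (1 + ε * ‖v‖ ^ 2), sq_nonneg (a - b)]

theorem isProxPtWith_of_proxRootFun_eq_zero (hε : 0 ≤ 1 + ε * ‖v‖ ^ 2) {α : ℝ}
    (hα : proxRootFun prox v w₀ ε α = 0) :
    IsProxPtWith (fun y => ‖y‖ ^ 2 + ε * ⟪v, y⟫ ^ 2) g w₀ (prox (w₀ - (ε * α) • v)) := by
  set p := prox (w₀ - (ε * α) • v)
  have hp := hprox (w₀ - (ε * α) • v)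
  have hroot : ⟪v, w₀ - p⟫ = -α := by rw [proxRootFun] at hα; linarith
  have hshift : ∀ y, ‖(w₀ - (ε * α) • v) - y‖ ^ 2
      = ‖w₀ - y‖ ^ 2 - 2 * (ε * α) * ⟪v, w₀ - y⟫ + (ε * α) ^ 2 * ‖v‖ ^ 2 := fun y => by
    rw [show (w₀ - (ε * α) • v) - y = (w₀ - y) - (ε * α) • v by abel, norm_sub_sq_real,
      real_inner_smul_right, norm_smul, mul_pow, Real.norm_eq_abs, sq_abs, real_inner_comm]
    ring
  intro z
  by_cases hz : g z = ⊤
  · rw [hz, EReal.top_add_coe]; exact le_top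
  rw [EReal.add_coe_le_add_coe_iff (hp.ne_top hg) (hg.ne_bot p) hz (hg.ne_bot z)]
  beta_reduce
  rw [hroot]
  have key := hp.three_point hg hz
  rw [hshift, hshift, hroot] at key
  have hpsd := norm_sq_add_mul_inner_sq_nonneg hε (z - p)
  rw [show ⟪v, z - p⟫ = -(⟪v, w₀ - z⟫ + α) by
    rw [← neg_neg α, ← hroot, inner_sub_right, inner_sub_right, inner_sub_right]; ring] at hpsd
  linear_combination key + 1 / 2 * hpsd

end RankOne

end Euclid

theorem dotProduct_one_mulVec_ofLp {ι : Type*} [Fintype ι] [DecidableEq ι]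
    (y : EuclideanSpace ℝ ι) :
    WithLp.ofLp y ⬝ᵥ ((1 : Matrix ι ι ℝ) *ᵥ WithLp.ofLp y) = ‖y‖ ^ 2 := by
  rw [one_mulVec, ← real_inner_self_eq_norm_sq, EuclideanSpace.inner_eq_star_dotProduct,
    star_trivial]

section SqrtDiag

variable {N : ℕ} (d : Fin N → ℝ) (hd : ∀ i, 0 < d i)

def sqrtDiagEquiv : (Fin N → ℝ) ≃ₗ[ℝ] EuclideanSpace ℝ (Fin N) where
  toFun y := WithLp.toLp 2 ((diagonal fun i => Real.sqrt (d i)) *ᵥ y)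
  invFun z := (diagonal fun i => (Real.sqrt (d i))⁻¹) *ᵥ WithLp.ofLp z
  map_add' y z := by simp [mulVec_add]
  map_smul' c y := by simp [mulVec_smul]
  left_inv y := by
    simp [mulVec_mulVec, diagonal_mul_diagonal, inv_mul_cancel₀ (Real.sqrt_pos.2 (hd _)).ne']
  right_inv z := by
    simp [mulVec_mulVec, diagonal_mul_diagonal, mul_inv_cancel₀ (Real.sqrt_pos.2 (hd _)).ne']

theorem sqrtDiagEquiv_apply (y : Fin N → ℝ) :
    sqrtDiagEquiv d hd y = WithLp.toLp 2 ((diagonal fun i => Real.sqrt (d i)) *ᵥ y) := rfl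

theorem inner_sqrtDiagEquiv (y z : Fin N → ℝ) :
    ⟪sqrtDiagEquiv d hd y, sqrtDiagEquiv d hd z⟫ = y ⬝ᵥ (diagonal d *ᵥ z) := by
  simp only [sqrtDiagEquiv_apply, EuclideanSpace.inner_toLp_toLp, star_trivial, dotProduct,
    mulVec_diagonal]
  refine Finset.sum_congr rfl fun i _ => ?_
  linear_combination (y i * z i) * Real.mul_self_sqrt (hd i).le

theorem inner_sqrtDiagEquiv_diagonal_inv (u y : Fin N → ℝ) :
    ⟪sqrtDiagEquiv d hd ((diagonal fun i => (d i)⁻¹) *ᵥ u), sqrtDiagEquiv d hd y⟫ = u ⬝ᵥ y := by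
  simp only [inner_sqrtDiagEquiv, dotProduct, mulVec_diagonal]
  refine Finset.sum_congr rfl fun i _ => ?_
  field_simp [(hd i).ne']

theorem norm_sq_add_mul_inner_sq_sqrtDiagEquiv (u : Fin N → ℝ) (ε : ℝ) (y : Fin N → ℝ) :
    ‖sqrtDiagEquiv d hd y‖ ^ 2
        + ε * ⟪sqrtDiagEquiv d hd ((diagonal fun i => (d i)⁻¹) *ᵥ u), sqrtDiagEquiv d hd y⟫ ^ 2
      = y ⬝ᵥ ((diagonal d + ε • vecMulVec u u) *ᵥ y) := by
  rw [← real_inner_self_eq_norm_sq, inner_sqrtDiagEquiv, inner_sqrtDiagEquiv_diagonal_inv,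
    add_mulVec, dotProduct_add, smul_mulVec, vecMulVec_mulVec]
  simp [dotProduct_comm u y, sq]

theorem norm_sqrtDiagEquiv_diagonal_inv_sq (u : Fin N → ℝ) :
    ‖sqrtDiagEquiv d hd ((diagonal fun i => (d i)⁻¹) *ᵥ u)‖ ^ 2 = ∑ i, u i ^ 2 / d i := by
  rw [← real_inner_self_eq_norm_sq, inner_sqrtDiagEquiv_diagonal_inv]
  simp only [dotProduct, mulVec_diagonal]
  exact Finset.sum_congr rfl fun i _ => by ring

theorem one_add_mul_norm_sq_pos {u : Fin N → ℝ} {ε : ℝ}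
    (hV : (diagonal d + ε • vecMulVec u u).PosDef) :
    0 < 1 + ε * ‖sqrtDiagEquiv d hd ((diagonal fun i => (d i)⁻¹) *ᵥ u)‖ ^ 2 := by
  set y := (diagonal fun i => (d i)⁻¹) *ᵥ u
  set v := sqrtDiagEquiv d hd y
  rcases eq_or_ne v 0 with hv | hv
  · simp [hv]
  have hy : y ≠ 0 := fun hy => hv (by simp [v, hy])
  have hq := hV.dotProduct_mulVec_pos hy
  rw [star_trivial, ← norm_sq_add_mul_inner_sq_sqrtDiagEquiv d hd, real_inner_self_eq_norm_sq] at hq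
  have hq' : 0 < ‖v‖ ^ 2 * (1 + ε * ‖v‖ ^ 2) := by linarith
  exact (pos_iff_pos_of_mul_pos hq').1 (by positivity)

end SqrtDiag

theorem stmt_5_general {N : ℕ} (h : (Fin N → ℝ) → EReal) (hh : Gamma0 h)
    (d : Fin N → ℝ) (hd : ∀ i, 0 < d i)
    (u : Fin N → ℝ)
    (ε : ℝ) (hε : ε = 1 ∨ ε = -1)
    (V : Matrix (Fin N) (Fin N) ℝ)
    (hV : V = Matrix.diagonal d + ε • vecMulVec u u) (hVpd : V.PosDef)
    (proxg : (Fin N → ℝ) → (Fin N → ℝ))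
    (hproxg : ∀ w : Fin N → ℝ,
      IsProxPt 1 (fun z => h ((Matrix.diagonal fun i => (Real.sqrt (d i))⁻¹) *ᵥ z))
        w (proxg w))
    (x : Fin N → ℝ)
    (L : ℝ → ℝ)
    (hL : ∀ α : ℝ, L α =
      u ⬝ᵥ (x - (Matrix.diagonal fun i => (Real.sqrt (d i))⁻¹) *ᵥ
        proxg ((Matrix.diagonal fun i => Real.sqrt (d i)) *ᵥ
          (x - (ε * α) • ((Matrix.diagonal fun i => (d i)⁻¹) *ᵥ u)))) + α) :
    (∃! αs : ℝ, L αs = 0) ∧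
    (∀ αs : ℝ, L αs = 0 →
      IsProxPt V h x ((Matrix.diagonal fun i => (Real.sqrt (d i))⁻¹) *ᵥ
        proxg ((Matrix.diagonal fun i => Real.sqrt (d i)) *ᵥ
          (x - (ε * αs) • ((Matrix.diagonal fun i => (d i)⁻¹) *ᵥ u))))) ∧
    (∃ c : ℝ, 0 < c ∧ ∀ a b : ℝ, (L a - L b) * (a - b) ≥ c * (a - b) ^ 2) ∧
    (∀ a b : ℝ, |L a - L b| ≤ (1 + ∑ i, u i ^ 2 / d i) * |a - b|) := by
  subst hV
  set Φ := sqrtDiagEquiv d hd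
  set v := Φ ((diagonal fun i => (d i)⁻¹) *ᵥ u)
  let prox : EuclideanSpace ℝ (Fin N) → EuclideanSpace ℝ (Fin N) :=
    fun w => WithLp.toLp 2 (proxg (WithLp.ofLp w))
  have hg : IsProperConvex (h ∘ Φ.symm) := hh.isProperConvex.comp_linearEquiv Φ.symm
  have hprox : ∀ w, IsProxPtWith (‖·‖ ^ 2) (h ∘ Φ.symm) w (prox w) := fun w =>
    IsProxPtWith.comp_linearMap (WithLp.linearEquiv 2 ℝ (Fin N → ℝ)).toLinearMap
      dotProduct_one_mulVec_ofLp
      (isProxPt_iff_isProxPtWith.1 (hproxg w.ofLp))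
  have hshift : ∀ α, Φ x - (ε * α) • v = Φ (x - (ε * α) • ((diagonal fun i => (d i)⁻¹) *ᵥ u)) :=
    fun α => by simp only [v, map_sub, map_smul]
  have hLM : L = proxRootFun prox v (Φ x) ε := funext fun α => by
    rw [hL, proxRootFun, hshift, ← Φ.apply_symm_apply (prox _), ← map_sub,
      inner_sqrtDiagEquiv_diagonal_inv]
    rfl
  subst hLM
  have hpos : 0 < 1 + ε * ‖v‖ ^ 2 := one_add_mul_norm_sq_pos d hd hVpd
  have hstrong := min_mul_sq_le_proxRootFun_sub_mul (v := v) (w₀ := Φ x) (ε := ε) hg hprox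
  refine ⟨existsUnique_eq_zero_of_strongly_increasing (continuous_proxRootFun hg hprox)
    (lt_min one_pos hpos) hstrong,
    fun α hα => ?_, ⟨_, lt_min one_pos hpos, hstrong⟩, fun a b => ?_⟩
  · have hp := isProxPtWith_of_proxRootFun_eq_zero hg hprox hpos.le hα
    rw [hshift, ← Φ.apply_symm_apply (prox _)] at hp
    have hpV := hp.comp_linearMap Φ.toLinearMap (norm_sq_add_mul_inner_sq_sqrtDiagEquiv d hd u ε)
    rw [show (h ∘ Φ.symm) ∘ Φ.toLinearMap = h from funext fun y => by simp] at hpV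
    exact isProxPt_iff_isProxPtWith.2 hpV
  · have hε₁ : |ε| = 1 := by rcases hε with rfl | rfl <;> norm_num
    have hv : ‖v‖ ^ 2 = ∑ i, u i ^ 2 / d i := norm_sqrtDiagEquiv_diagonal_inv_sq d hd u
    simpa only [hε₁, one_mul, hv] using
      abs_proxRootFun_sub_le (v := v) (w₀ := Φ x) (ε := ε) hg hprox a b

/-- Proximity operator in the metric `V = D ± u uᵀ` (SPD, `D` diagonal
with positive entries, encoded via `ε = 1` for `D + uuᵀ` and `ε = -1` for `D - uuᵀ`):
`prox^V_h(x) = D^{-1/2}(prox_{h∘D^{-1/2}}(D^{1/2}(x ∓ α* D⁻¹ u)))` where `α*` is the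
unique root of `L(α) = ⟨u, x - D^{-1/2}(prox_{h∘D^{-1/2}}(D^{1/2}(x ∓ α D⁻¹ u)))⟩ + α`,
and `L` is strongly increasing and Lipschitz with constant `1 + ∑ i, u i²/d i`. -/
theorem stmt_5 {N : ℕ} (h : (Fin N → ℝ) → EReal) (hh : Gamma0 h)
    (d : Fin N → ℝ) (hd : ∀ i, 0 < d i)
    (u : Fin N → ℝ) (hu : u ≠ 0)
    (ε : ℝ) (hε : ε = 1 ∨ ε = -1)
    (V : Matrix (Fin N) (Fin N) ℝ)
    (hV : V = Matrix.diagonal d + ε • vecMulVec u u) (hVpd : V.PosDef)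
    (proxg : (Fin N → ℝ) → (Fin N → ℝ))
    (hproxg : ∀ w : Fin N → ℝ,
      IsProxPt 1 (fun z => h ((Matrix.diagonal fun i => (Real.sqrt (d i))⁻¹) *ᵥ z))
        w (proxg w))
    (x : Fin N → ℝ)
    (L : ℝ → ℝ)
    (hL : ∀ α : ℝ, L α =
      u ⬝ᵥ (x - (Matrix.diagonal fun i => (Real.sqrt (d i))⁻¹) *ᵥ
        proxg ((Matrix.diagonal fun i => Real.sqrt (d i)) *ᵥ
          (x - (ε * α) • ((Matrix.diagonal fun i => (d i)⁻¹) *ᵥ u)))) + α) :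
    (∃! αs : ℝ, L αs = 0) ∧
    (∀ αs : ℝ, L αs = 0 →
      IsProxPt V h x ((Matrix.diagonal fun i => (Real.sqrt (d i))⁻¹) *ᵥ
        proxg ((Matrix.diagonal fun i => Real.sqrt (d i)) *ᵥ
          (x - (ε * αs) • ((Matrix.diagonal fun i => (d i)⁻¹) *ᵥ u))))) ∧
    (∃ c : ℝ, 0 < c ∧ ∀ a b : ℝ, (L a - L b) * (a - b) ≥ c * (a - b) ^ 2) ∧
    (∀ a b : ℝ, |L a - L b| ≤ (1 + ∑ i, u i ^ 2 / d i) * |a - b|) :=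
  stmt_5_general h hh d hd u ε hε V hV hVpd proxg hproxg x L hL
end
end
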